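/- If T is a linear operator on entire functions with [T, d/dz] = aI and f ∈ ker T, then for every λ ∈ ℂ the translate S_λ f defined by (S_λ f)(z) = f(z+λ) satisfies T(S_λ f) = aλ · S_λ f; that is, each translate of f is an eigenvector of T with eigenvalue aλ. -/

import Mathlib

/-! Iterating `[T, D] = a` on `f ∈ ker T` gives `T (D^[n+1] f) = (n + 1) a • D^[n] f`. By Cauchy's
estimates the Taylor series `S_λ f = ∑ λ^n / n! • D^[n] f` converges uniformly on compacts, so the
continuous operator `T` may be applied termwise, and the resulting series is `a λ` times the Taylor
series of `S_λ f` shifted by one index. -/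

open Complex

lemma Differentiable.entire_deriv {f : ℂ → ℂ} (hf : Differentiable ℂ f) :
    Differentiable ℂ (_root_.deriv f) := by
  rw [← analyticOnNhd_univ_iff_differentiable] at hf ⊢
  exact hf.deriv

/-- The space `H(ℂ)` of entire functions, as a submodule of `C(ℂ, ℂ)` with the
compact-open topology (uniform convergence on compacts). -/
noncomputable def Entire : Submodule ℂ C(ℂ, ℂ) where
  carrier := {f | Differentiable ℂ f}
  add_mem' := fun hf hg => by simpa using hf.add hg
  zero_mem' := by
    show Differentiable ℂ ⇑(0 : C(ℂ, ℂ))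
    rw [ContinuousMap.coe_zero]
    exact differentiable_const 0
  smul_mem' := fun c f hf => by simpa using hf.const_smul c

lemma Entire.diff (f : Entire) : Differentiable ℂ ⇑(f : C(ℂ, ℂ)) := f.2

/-- Differentiation `d/dz` on entire functions. -/
noncomputable def derivE (f : Entire) : Entire :=
  ⟨⟨deriv ⇑(f : C(ℂ, ℂ)), (Entire.diff f).entire_deriv.continuous⟩,
    (Entire.diff f).entire_deriv⟩

/-- The translation operator `S_λ` on entire functions. -/
noncomputable def translE (lam : ℂ) (f : Entire) : Entire :=
  ⟨⟨fun z => (f : C(ℂ, ℂ)) (z + lam), by fun_prop⟩, (Entire.diff f).comp (by fun_prop)⟩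

open Nat Filter Metric

section TaylorSeries

variable {E : Type*} [NormedAddCommGroup E] [NormedSpace ℂ E] [CompleteSpace E]

theorem Differentiable.exists_norm_iteratedDeriv_le_of_isCompact {f : ℂ → E}
    (hf : Differentiable ℂ f) {K : Set ℂ} (hK : IsCompact K) {R : ℝ} (hR : 0 < R) :
    ∃ C, ∀ n z, z ∈ K → ‖iteratedDeriv n f z‖ ≤ n ! * C / R ^ n := by
  obtain ⟨C, hC⟩ := (hK.cthickening (r := R)).exists_bound_of_continuousOn
    hf.continuous.continuousOn
  refine ⟨C, fun n z hz => norm_iteratedDeriv_le_of_forall_mem_sphere_norm_le n hR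
    hf.diffContOnCl fun w hw => hC w ?_⟩
  exact mem_cthickening_of_dist_le w z R K hz (mem_sphere.1 hw).le

theorem Differentiable.tendstoUniformlyOn_taylorSeries {f : ℂ → E} (hf : Differentiable ℂ f)
    (lam : ℂ) {K : Set ℂ} (hK : IsCompact K) :
    TendstoUniformlyOn (fun s z => ∑ n ∈ s, (n ! : ℂ)⁻¹ • lam ^ n • iteratedDeriv n f z)
      (fun z => f (z + lam)) atTop K := by
  set R := ‖lam‖ + 1
  have hR : 0 < R := by positivity
  obtain ⟨C, hC⟩ := hf.exists_norm_iteratedDeriv_le_of_isCompact hK hR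
  have hgeom : Summable fun n : ℕ => C * (‖lam‖ / R) ^ n :=
    (summable_geometric_of_lt_one (by positivity) ((div_lt_one hR).2 (lt_add_one _))).mul_left C
  have hterm : ∀ n z, z ∈ K →
      ‖(n ! : ℂ)⁻¹ • lam ^ n • iteratedDeriv n f z‖ ≤ C * (‖lam‖ / R) ^ n := by
    intro n z hz
    calc ‖(n ! : ℂ)⁻¹ • lam ^ n • iteratedDeriv n f z‖
        = (n ! : ℝ)⁻¹ * ‖lam‖ ^ n * ‖iteratedDeriv n f z‖ := by
          rw [norm_smul, norm_smul, norm_inv, norm_pow, Complex.norm_natCast, mul_assoc]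
      _ ≤ (n ! : ℝ)⁻¹ * ‖lam‖ ^ n * (n ! * C / R ^ n) := by gcongr; exact hC n z hz
      _ = C * (‖lam‖ / R) ^ n := by rw [div_pow]; field_simp
  have hsum : (fun z => ∑' n : ℕ, (n ! : ℂ)⁻¹ • lam ^ n • iteratedDeriv n f z) =
      fun z => f (z + lam) := by
    funext z
    simpa using taylorSeries_eq_of_entire hf z (z + lam)
  exact hsum ▸ tendstoUniformlyOn_tsum hgeom hterm

end TaylorSeries

theorem LinearMap.apply_iterate_succ_of_commutator_eq_smul {R M : Type*} [CommRing R]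
    [AddCommGroup M] [Module R M] (T : M →ₗ[R] M) {D : M → M}
    (hD : ∀ (c : R) x, D (c • x) = c • D x) {a : R} (hcomm : ∀ x, T (D x) - D (T x) = a • x)
    {x : M} (hx : T x = 0) (n : ℕ) : T (D^[n + 1] x) = ((n + 1 : R) * a) • D^[n] x := by
  induction n with
  | zero =>
    have hD0 : D 0 = 0 := by simpa using hD 0 0
    simpa [hx, hD0] using hcomm x
  | succ n ih =>
    rw [Function.iterate_succ_apply' D (n + 1), eq_add_of_sub_eq (hcomm _), ih, hD,
      ← Function.iterate_succ_apply' D n, ← add_smul]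
    push_cast
    ring_nf

theorem coe_iterate_derivE (f : Entire) (n : ℕ) :
    ⇑((derivE^[n] f : Entire) : C(ℂ, ℂ)) = iteratedDeriv n ⇑(f : C(ℂ, ℂ)) := by
  induction n with
  | zero => rfl
  | succ n ih => rw [Function.iterate_succ_apply', iteratedDeriv_succ, ← ih]; rfl

theorem derivE_smul (c : ℂ) (g : Entire) : derivE (c • g) = c • derivE g := by
  ext z
  exact deriv_const_smul c (Entire.diff g).differentiableAt

theorem hasSum_translE (f : Entire) (lam : ℂ) :
    HasSum (fun n : ℕ => ((n ! : ℂ)⁻¹ * lam ^ n) • derivE^[n] f) (translE lam f) := by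
  refine (Topology.IsInducing.subtypeVal.hasSum_iff (g := Entire.subtype) _ _).1 ?_
  rw [HasSum, ContinuousMap.tendsto_iff_forall_isCompact_tendstoUniformlyOn]
  intro K hK
  convert (Entire.diff f).tendstoUniformlyOn_taylorSeries lam hK using 1
  · ext s z
    simp [coe_iterate_derivE, mul_smul]
  · rfl
  · rfl

/-- If `[T, d/dz] = a • I` and `T f = 0`, then each translate `S_λ f` is an
eigenvector of `T` with eigenvalue `a λ`. -/
theorem stmt_5 (T : Entire →L[ℂ] Entire) (a : ℂ)
    (hcomm : ∀ g : Entire, T (derivE g) - derivE (T g) = a • g)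
    (f : Entire) (hker : T f = 0) :
    ∀ lam : ℂ, T (translE lam f) = (a * lam) • translE lam f := by
  intro lam
  have hS := hasSum_translE f lam
  have hTD (n : ℕ) : T (derivE^[n + 1] f) = ((n + 1 : ℂ) * a) • derivE^[n] f :=
    T.toLinearMap.apply_iterate_succ_of_commutator_eq_smul derivE_smul hcomm (x := f) hker n
  have hshift (n : ℕ) : T ((((n + 1) ! : ℂ)⁻¹ * lam ^ (n + 1)) • derivE^[n + 1] f) =
      (a * lam) • (((n ! : ℂ)⁻¹ * lam ^ n) • derivE^[n] f) := by
    simp only [map_smul, hTD, smul_smul]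
    congr 1
    push_cast [Nat.factorial_succ]
    field_simp
    ring
  have hT : HasSum (fun n : ℕ => T ((((n + 1) ! : ℂ)⁻¹ * lam ^ (n + 1)) • derivE^[n + 1] f))
      (T (translE lam f)) := by
    have h0 : T (((0 ! : ℂ)⁻¹ * lam ^ 0) • derivE^[0] f) = 0 := by simp [hker]
    refine (hasSum_nat_add_iff (f := fun n => T (((n ! : ℂ)⁻¹ * lam ^ n) • derivE^[n] f)) 1).2 ?_
    rw [Finset.sum_range_one, h0, add_zero]
    exact hS.mapL T
  exact hT.unique (by simpa only [hshift] using hS.const_smul (a * lam))
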